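/- arXiv:1511.04505 — 2 statements merged into one kernel-verified Lean document; each statement's English description precedes it below -/
import Mathlib

section
/- Let Δx > 0 and x_j ∈ ℝ, and set x_{j±1} = x_j ± Δx. Write I_{j+l} = (x_{j+l} − Δx/2, x_{j+l} + Δx/2) for l = −1, 0, 1. Then for any real numbers ū_{j-1}, ū_j, ū_{j+1}, v̄_{j-1}, v̄_j, v̄_{j+1} there exists a unique real polynomial Q of degree at most 5 satisfying the six conditions: (1/Δx)·∫_{I_{j+l}} Q(x) dx = ū_{j+l} and (1/Δx)·∫_{I_{j+l}} Q(x)·(x − x_{j+l})/Δx dx = v̄_{j+l} for l = −1, 0, 1. -/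
/-!
Let `Q` have degree `< 2n` and vanishing averages and first moments on `n` adjacent cells, and let
`F`, `R` be the antiderivatives of `Q`, `F` vanishing at the left end of the stencil. Zero cell averages make `F` vanish at every cell endpoint; integrating by parts, zero
first moments then make `R` vanish there as well. So `R`, of degree at most `2n + 1`, has a double
root at each of the `n + 1` endpoints, hence `R = 0` and `Q = R'' = 0`. The linear map sending a
polynomial of degree `< 2n` to its `2n` cell data is therefore injective, hence bijective
by a dimension count.
-/

open MeasureTheory Polynomial

namespace Polynomial

theorem eq_zero_of_natDegree_lt_two_mul_card_of_isRoot_derivative {R : Type*} [CommRing R]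
    [IsDomain R] {p : R[X]} (s : Finset R) (hdeg : p.natDegree < 2 * s.card)
    (hroot : ∀ a ∈ s, p.IsRoot a ∧ p.derivative.IsRoot a) : p = 0 := by
  classical
  by_contra hp
  have hle : 2 • s.val ≤ p.roots := by
    refine Multiset.le_iff_count.2 fun a => ?_
    rw [Multiset.count_nsmul, count_roots]
    by_cases ha : a ∈ s
    · rw [Multiset.count_eq_one_of_mem s.nodup ha]
      exact (one_lt_rootMultiplicity_iff_isRoot hp).2 (hroot a ha)
    · simp [Multiset.count_eq_zero_of_notMem ha]
  have := (Multiset.card_le_card hle).trans (card_roots' p)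
  simp only [Multiset.card_nsmul, Finset.card_val] at this
  omega

theorem exists_derivative_eq {K : Type*} [Field K] [CharZero K] (p : K[X]) :
    ∃ q, derivative q = p := by
  induction p using Polynomial.induction_on' with
  | add p q hp hq =>
    obtain ⟨P, rfl⟩ := hp
    obtain ⟨Q, rfl⟩ := hq
    exact ⟨P + Q, derivative_add⟩
  | monomial n a =>
    refine ⟨monomial (n + 1) (a / (n + 1)), ?_⟩
    rw [derivative_monomial]
    congr 1
    push_cast
    field_simp

theorem exists_derivative_eq_and_eval_eq_zero {K : Type*} [Field K] [CharZero K] (p : K[X])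
    (a : K) :
    ∃ q, derivative q = p ∧ q.eval a = 0 := by
  obtain ⟨q, hq⟩ := exists_derivative_eq p
  exact ⟨q - C (q.eval a), by simp [hq], by simp⟩

theorem integral_eval_derivative (p : ℝ[X]) (a b : ℝ) :
    ∫ x in a..b, p.derivative.eval x = p.eval b - p.eval a :=
  intervalIntegral.integral_eq_sub_of_hasDerivAt (fun x _ => p.hasDerivAt x)
    (p.derivative.continuous.intervalIntegrable a b)

theorem eq_zero_of_cell_integrals_eq_zero {n : ℕ} {Q : ℝ[X]} (e c : ℕ → ℝ)
    (he : Set.InjOn e (Set.Iic n)) (hdeg : Q.natDegree < 2 * n)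
    (h0 : ∀ k < n, ∫ x in e k..e (k + 1), Q.eval x = 0)
    (h1 : ∀ k < n, ∫ x in e k..e (k + 1), Q.eval x * (x - c k) = 0) : Q = 0 := by
  obtain ⟨F, hF, hF0⟩ := exists_derivative_eq_and_eval_eq_zero Q (e 0)
  obtain ⟨R, hR, hR0⟩ := exists_derivative_eq_and_eval_eq_zero F (e 0)
  have hvanish : ∀ k ≤ n, F.eval (e k) = 0 ∧ R.eval (e k) = 0 := by
    intro k hk
    induction k with
    | zero => exact ⟨hF0, hR0⟩
    | succ k ih =>
      obtain ⟨hFk, hRk⟩ := ih (by omega)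
      have hFk1 : F.eval (e (k + 1)) = 0 := by
        have := integral_eval_derivative F (e k) (e (k + 1))
        rw [hF, h0 k (by omega), hFk] at this
        linarith
      -- integration by parts
      have hparts : F = derivative (F * (X - C (c k))) - Q * (X - C (c k)) := by
        rw [derivative_mul, hF]; simp
      have hFint : ∫ x in e k..e (k + 1), F.eval x = 0 := by
        rw [hparts]
        simp only [eval_sub]
        rw [intervalIntegral.integral_sub ((derivative _).continuous.intervalIntegrable _ _)
          ((Q * (X - C (c k))).continuous.intervalIntegrable _ _), integral_eval_derivative]
        simp [hFk, hFk1, h1 k (by omega)]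
      have := integral_eval_derivative R (e k) (e (k + 1))
      rw [hR, hFint, hRk] at this
      exact ⟨hFk1, by linarith⟩
  have hcard : ((Finset.range (n + 1)).image e).card = n + 1 := by
    rw [Finset.card_image_of_injOn, Finset.card_range]
    intro i hi j hj hij
    exact he (by simpa [Nat.lt_succ_iff] using hi) (by simpa [Nat.lt_succ_iff] using hj) hij
  have hRzero : R = 0 := by
    refine eq_zero_of_natDegree_lt_two_mul_card_of_isRoot_derivative
      ((Finset.range (n + 1)).image e) ?_ ?_
    · have hRF := natDegree_derivative R
      have hFQ := natDegree_derivative F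
      rw [hR] at hRF
      rw [hF] at hFQ
      rw [hcard]
      omega
    · simp only [Finset.mem_image, Finset.mem_range]
      rintro _ ⟨k, hk, rfl⟩
      rw [hR]
      exact (hvanish k (by omega)).symm
  rw [← hF, ← hR, hRzero, derivative_zero, derivative_zero]

noncomputable def intervalMoment (a b : ℝ) (w : ℝ[X]) : ℝ[X] →ₗ[ℝ] ℝ where
  toFun Q := ∫ x in a..b, (Q * w).eval x
  map_add' P Q := by
    simp only [add_mul, eval_add]
    exact intervalIntegral.integral_add ((P * w).continuous.intervalIntegrable a b)
      ((Q * w).continuous.intervalIntegrable a b)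
  map_smul' r Q := by simp

@[simp]
theorem intervalMoment_apply (a b : ℝ) (w Q : ℝ[X]) :
    intervalMoment a b w Q = ∫ x in a..b, (Q * w).eval x := rfl

noncomputable def cellMoments (n : ℕ) (e c : ℕ → ℝ) : ℝ[X] →ₗ[ℝ] (Fin n → ℝ) × (Fin n → ℝ) :=
  (LinearMap.pi fun k : Fin n => intervalMoment (e k) (e (k + 1)) 1).prod
    (LinearMap.pi fun k : Fin n => intervalMoment (e k) (e (k + 1)) (X - C (c k)))

theorem cellMoments_eq_iff {n : ℕ} {e c : ℕ → ℝ} {Q : ℝ[X]} {u v : Fin n → ℝ} :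
    cellMoments n e c Q = (u, v) ↔ ∀ k : Fin n,
      ∫ x in e k..e (k + 1), Q.eval x = u k ∧
        ∫ x in e k..e (k + 1), Q.eval x * (x - c k) = v k := by
  simp [cellMoments, Prod.ext_iff, funext_iff, forall_and]

theorem cellMoments_injOn {n : ℕ} {e : ℕ → ℝ} (c : ℕ → ℝ) (he : Set.InjOn e (Set.Iic n)) :
    Set.InjOn (cellMoments n e c) {Q | Q.degree < ↑(2 * n)} := by
  intro P hP Q hQ hPQ
  have hzero : cellMoments n e c (P - Q) = (0, 0) := by rw [map_sub, hPQ, sub_self]; rfl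
  have hcell := fun k hk => cellMoments_eq_iff.1 hzero ⟨k, hk⟩
  rw [← sub_eq_zero]
  by_contra hne
  refine hne (eq_zero_of_cell_integrals_eq_zero e c he ?_ (fun k hk => (hcell k hk).1)
    (fun k hk => (hcell k hk).2))
  rw [natDegree_lt_iff_degree_lt hne]
  exact (degree_sub_le P Q).trans_lt (max_lt hP hQ)

theorem existsUnique_cellMoments_eq {n : ℕ} {e : ℕ → ℝ} (c : ℕ → ℝ)
    (he : Set.InjOn e (Set.Iic n)) (y : (Fin n → ℝ) × (Fin n → ℝ)) :
    ∃! Q : ℝ[X], Q.degree < ↑(2 * n) ∧ cellMoments n e c Q = y := by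
  set T := cellMoments n e c ∘ₗ (degreeLT ℝ (2 * n)).subtype
  have hinj : Function.Injective T := fun P Q hPQ =>
    Subtype.ext (cellMoments_injOn c he (mem_degreeLT.1 P.2) (mem_degreeLT.1 Q.2) hPQ)
  have hrank : Module.finrank ℝ (degreeLT ℝ (2 * n)) =
      Module.finrank ℝ ((Fin n → ℝ) × (Fin n → ℝ)) := by
    rw [(degreeLTEquiv ℝ (2 * n)).finrank_eq, Module.finrank_prod, Module.finrank_fin_fun,
      Module.finrank_fin_fun]
    ring
  obtain ⟨⟨Q, hQ⟩, hTQ⟩ :=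
    (LinearMap.injective_iff_surjective_of_finrank_eq_finrank hrank).1 hinj y
  refine ⟨Q, ⟨mem_degreeLT.1 hQ, hTQ⟩, fun P hP => ?_⟩
  exact cellMoments_injOn c he hP.1 (mem_degreeLT.1 hQ) (hP.2.trans hTQ.symm)

end Polynomial

theorem forall_fin_three_sub_one_iff {P : ℤ → Prop} :
    (∀ k : Fin 3, P ((k : ℕ) - 1)) ↔ ∀ l : ℤ, l = -1 ∨ l = 0 ∨ l = 1 → P l := by
  refine ⟨fun h l hl => ?_, fun h k => h _ (by fin_cases k <;> simp)⟩
  rcases hl with rfl | rfl | rfl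
  exacts [h 0, h 1, h 2]

theorem cell_average_and_moment_eq_iff {Δx : ℝ} (hΔx : 0 < Δx) (xc : ℝ) (Q : ℝ[X]) (u v : ℝ) :
    ((1 / Δx) * ∫ x in Set.Ioo (xc - Δx / 2) (xc + Δx / 2), Q.eval x) = u ∧
      ((1 / Δx) * ∫ x in Set.Ioo (xc - Δx / 2) (xc + Δx / 2), Q.eval x * ((x - xc) / Δx)) = v ↔
    ∫ x in xc - Δx / 2..xc + Δx / 2, Q.eval x = Δx * u ∧
      ∫ x in xc - Δx / 2..xc + Δx / 2, Q.eval x * (x - xc) = Δx ^ 2 * v := by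
  have hle : xc - Δx / 2 ≤ xc + Δx / 2 := by linarith
  simp only [mul_div_assoc', integral_div, intervalIntegral.integral_of_le hle,
    integral_Ioc_eq_integral_Ioo]
  refine and_congr ?_ ?_ <;> field_simp

/-- Interpolation on the big stencil `S = {I_{j-1}, I_j, I_{j+1}}`: given the cell
averages `ū_{j-1}, ū_j, ū_{j+1}` and first moments `v̄_{j-1}, v̄_j, v̄_{j+1}`, there is a
unique polynomial of degree at most 5 matching all six conditions. -/
theorem stmt_9 (Δx xj : ℝ) (hΔx : 0 < Δx)
    (ubar : ℤ → ℝ) (vbar : ℤ → ℝ) :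
    ∃! Q : Polynomial ℝ,
      Q.degree ≤ 5 ∧
      ∀ l : ℤ, l = -1 ∨ l = 0 ∨ l = 1 →
        ((1 / Δx) * ∫ x in Set.Ioo (xj + l * Δx - Δx / 2) (xj + l * Δx + Δx / 2),
            Q.eval x) = ubar l ∧
        ((1 / Δx) * ∫ x in Set.Ioo (xj + l * Δx - Δx / 2) (xj + l * Δx + Δx / 2),
            Q.eval x * ((x - (xj + l * Δx)) / Δx)) = vbar l := by
  set c : ℕ → ℝ := fun k => xj + (((k : ℤ) - 1 : ℤ) : ℝ) * Δx
  set e : ℕ → ℝ := fun k => c k - Δx / 2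
  have hstep (k : ℕ) : e (k + 1) = c k + Δx / 2 := by simp only [e, c]; push_cast; ring
  have he : Set.InjOn e (Set.Iic 3) := fun i _ j _ hij => by
    simpa [e, c, hΔx.ne'] using hij
  refine (existsUnique_congr fun Q => ?_).1 (existsUnique_cellMoments_eq c he
      (fun k => Δx * ubar ((k : ℕ) - 1), fun k => Δx ^ 2 * vbar ((k : ℕ) - 1)))
  rw [cellMoments_eq_iff, ← forall_fin_three_sub_one_iff]
  refine and_congr (by rw [← mem_degreeLT, ← mem_degreeLE, degreeLT_succ_eq_degreeLE]; rfl)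
    (forall_congr' fun k => ?_)
  rw [hstep, cell_average_and_moment_eq_iff hΔx]
end

section
/- Let Δx, Δy > 0, (x_i, y_j) ∈ ℝ², and let I_{ij} = (x_i − Δx/2, x_i + Δx/2) × (y_j − Δy/2, y_j + Δy/2). Let u, H₁, H₂ : ℝ² × ℝ → ℝ be C¹ functions satisfying u_t + (H₁)_x + (H₂)_y = 0 everywhere. Then the mixed moment Z̄_{ij}(t) = (1/(ΔxΔy))·∬_{I_{ij}} u(x,y,t)·((x − x_i)/Δx)·((y − y_j)/Δy) dx dy is differentiable in t and satisfies the exact evolution equation: dZ̄_{ij}/dt = −(1/(2ΔxΔy))·∫_{y_{j−1/2}}^{y_{j+1/2}} [H₁(x_{i+1/2}, y, t) + H₁(x_{i−1/2}, y, t)]·(y − y_j)/Δy dy − (1/(2ΔxΔy))·∫_{x_{i−1/2}}^{x_{i+1/2}} [H₂(x, y_{j+1/2}, t) + H₂(x, y_{j−1/2}, t)]·(x − x_i)/Δx dx + (1/(Δx²Δy))·∬_{I_{ij}} H₁·(y − y_j)/Δy dx dy + (1/(ΔxΔy²))·∬_{I_{ij}} H₂·(x − x_i)/Δx dx dy, where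 x_{i±1/2} = x_i ± Δx/2 and y_{j±1/2} = y_j ± Δy/2. -/
/-!
Differentiate the moment under the integral sign (the integrand is `C¹` and the cell is
bounded), replace `u_t` by `-(H₁)_x - (H₂)_y`, and integrate each term by parts in its own
variable after Fubini. The weight `(x - x_i)/Δx` equals `±1/2` at the cell edges, which gives
the averaged edge fluxes, and its derivative `1/Δx` gives the volume terms.
-/

open MeasureTheory Set

section Slices

variable {F : Type*} [NormedAddCommGroup F] [NormedSpace ℝ F] {f : ℝ × ℝ × ℝ → F}
  {x y t : ℝ}

theorem DifferentiableAt.hasDerivAt_slice₁ (hf : DifferentiableAt ℝ f (x, y, t)) :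
    HasDerivAt (fun ξ => f (ξ, y, t)) (fderiv ℝ f (x, y, t) (1, 0, 0)) x :=
  hf.hasFDerivAt.comp_hasDerivAt x
    ((hasDerivAt_id x).prodMk ((hasDerivAt_const x y).prodMk (hasDerivAt_const x t)))

theorem DifferentiableAt.hasDerivAt_slice₂ (hf : DifferentiableAt ℝ f (x, y, t)) :
    HasDerivAt (fun η => f (x, η, t)) (fderiv ℝ f (x, y, t) (0, 1, 0)) y :=
  hf.hasFDerivAt.comp_hasDerivAt y
    ((hasDerivAt_const y x).prodMk ((hasDerivAt_id y).prodMk (hasDerivAt_const y t)))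

theorem DifferentiableAt.hasDerivAt_slice₃ (hf : DifferentiableAt ℝ f (x, y, t)) :
    HasDerivAt (fun τ => f (x, y, τ)) (fderiv ℝ f (x, y, t) (0, 0, 1)) t :=
  hf.hasFDerivAt.comp_hasDerivAt t
    ((hasDerivAt_const t x).prodMk ((hasDerivAt_const t y).prodMk (hasDerivAt_id t)))

end Slices

theorem ContDiff.continuous_fderiv_apply_timeSlice {F : Type*} [NormedAddCommGroup F]
    [NormedSpace ℝ F] {f : ℝ × ℝ × ℝ → F} (hf : ContDiff ℝ 1 f) (v : ℝ × ℝ × ℝ) (t : ℝ) :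
    Continuous fun p : ℝ × ℝ => fderiv ℝ f (p.1, p.2, t) v :=
  ((hf.continuous_fderiv one_ne_zero).comp (by fun_prop)).clm_apply continuous_const

theorem fderiv_time_eq_neg_sub_of_conservationLaw {u H₁ H₂ : ℝ × ℝ × ℝ → ℝ}
    (hu : Differentiable ℝ u) (hH₁ : Differentiable ℝ H₁) (hH₂ : Differentiable ℝ H₂)
    (hlaw : ∀ x y t : ℝ,
      deriv (fun τ : ℝ => u (x, y, τ)) t
        + deriv (fun ξ : ℝ => H₁ (ξ, y, t)) x
        + deriv (fun η : ℝ => H₂ (x, η, t)) y = 0)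
    (p : ℝ × ℝ × ℝ) :
    fderiv ℝ u p (0, 0, 1) = -fderiv ℝ H₁ p (1, 0, 0) - fderiv ℝ H₂ p (0, 1, 0) := by
  obtain ⟨x, y, t⟩ := p
  have h := hlaw x y t
  rw [(hu _).hasDerivAt_slice₃.deriv, (hH₁ _).hasDerivAt_slice₁.deriv,
    (hH₂ _).hasDerivAt_slice₂.deriv] at h
  linarith

theorem Ioo_prod_Ioo_subset_Icc (a b c d : ℝ) : Ioo a b ×ˢ Ioo c d ⊆ Icc (a, c) (b, d) := by
  rw [← Icc_prod_Icc]; exact prod_mono Ioo_subset_Icc_self Ioo_subset_Icc_self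

theorem hasDerivAt_setIntegral_of_continuous {X E : Type*} [TopologicalSpace X]
    [MeasurableSpace X] [OpensMeasurableSpace X] [NormedAddCommGroup E] [NormedSpace ℝ E]
    {μ : Measure X} [IsFiniteMeasureOnCompacts μ] {K S : Set X} (hK : IsCompact K)
    (hS : MeasurableSet S) (hSK : S ⊆ K) {F F' : ℝ → X → E}
    (hF : Continuous (Function.uncurry F)) (hF' : Continuous (Function.uncurry F'))
    (hderiv : ∀ τ p, HasDerivAt (F · p) (F' τ p) τ) (t : ℝ) :
    HasDerivAt (fun τ => ∫ p in S, F τ p ∂μ) (∫ p in S, F' t p ∂μ) t := by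
  have hSfin : μ S ≠ ⊤ := (measure_mono hSK).trans_lt hK.measure_lt_top |>.ne
  have hint : ∀ {g : X → E}, Continuous g → IntegrableOn g S μ := fun hg =>
    hg.continuousOn.integrableOn_of_subset_isCompact hK hS hSK hSfin
  obtain ⟨C, hC⟩ := (isCompact_Icc (a := t - 1) (b := t + 1)).prod hK
    |>.exists_bound_of_continuousOn hF'.continuousOn
  refine (hasDerivAt_integral_of_dominated_loc_of_deriv_le (bound := fun _ => C)
    (Metric.ball_mem_nhds t one_pos)
    (.of_forall fun τ => (hint (hF.comp (Continuous.prodMk_right τ))).aestronglyMeasurable)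
    (hint (hF.comp (Continuous.prodMk_right t)))
    (hint (hF'.comp (Continuous.prodMk_right t))).aestronglyMeasurable
    ((ae_restrict_mem hS).mono fun p hp τ hτ => hC (τ, p) ⟨?_, hSK hp⟩)
    (integrableOn_const hSfin) (.of_forall fun p τ _ => hderiv τ p)).2
  rw [Metric.mem_ball, Real.dist_eq, abs_lt] at hτ
  constructor <;> linarith

theorem hasDerivAt_setIntegral_Ioo_prod_Ioo_mul_mul {u : ℝ × ℝ × ℝ → ℝ}
    (hu : ContDiff ℝ 1 u) {φ ψ : ℝ → ℝ} (hφ : Continuous φ) (hψ : Continuous ψ) (a b c d t : ℝ) :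
    HasDerivAt (fun τ => ∫ p in Ioo a b ×ˢ Ioo c d, u (p.1, p.2, τ) * φ p.1 * ψ p.2)
      (∫ p in Ioo a b ×ˢ Ioo c d, fderiv ℝ u (p.1, p.2, t) (0, 0, 1) * φ p.1 * ψ p.2) t := by
  have hu₀ := hu.continuous
  have hut : Continuous fun q : ℝ × ℝ × ℝ => fderiv ℝ u q (0, 0, 1) :=
    (hu.continuous_fderiv one_ne_zero).clm_apply continuous_const
  exact hasDerivAt_setIntegral_of_continuous isCompact_Icc
    (measurableSet_Ioo.prod measurableSet_Ioo) (Ioo_prod_Ioo_subset_Icc a b c d)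
    (F := fun τ p => u (p.1, p.2, τ) * φ p.1 * ψ p.2) (by fun_prop) (by fun_prop)
    (fun τ p => ((hu.differentiable one_ne_zero _).hasDerivAt_slice₃.mul_const _).mul_const _)
    t

theorem Continuous.integrableOn_Ioo_prod_Ioo {E : Type*} [NormedAddCommGroup E]
    {f : ℝ × ℝ → E} (hf : Continuous f) (a b c d : ℝ) : IntegrableOn f (Ioo a b ×ˢ Ioo c d) :=
  hf.integrableOn_Icc.mono_set (Ioo_prod_Ioo_subset_Icc a b c d)

theorem integral_cell_deriv_mul_moment_add {xi Δx : ℝ} (hΔx : 0 < Δx) {g g' : ℝ → ℝ}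
    (hg : ∀ x ∈ Icc (xi - Δx / 2) (xi + Δx / 2), HasDerivAt g (g' x) x)
    (hg' : IntervalIntegrable g' volume (xi - Δx / 2) (xi + Δx / 2)) :
    ∫ x in Ioo (xi - Δx / 2) (xi + Δx / 2), (g' x * ((x - xi) / Δx) + g x / Δx) =
      (g (xi + Δx / 2) + g (xi - Δx / 2)) / 2 := by
  have hle : xi - Δx / 2 ≤ xi + Δx / 2 := by linarith
  have hw : ∀ x ∈ uIcc (xi - Δx / 2) (xi + Δx / 2),
      HasDerivAt (fun x => (x - xi) / Δx) (1 / Δx) x := fun x _ =>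
    ((hasDerivAt_id x).sub_const xi).div_const Δx
  rw [← integral_Ioc_eq_integral_Ioo, ← intervalIntegral.integral_of_le hle]
  have hibp := intervalIntegral.integral_deriv_mul_eq_sub (by rwa [uIcc_of_le hle]) hw hg'
    intervalIntegrable_const
  simp only [mul_one_div] at hibp
  rw [hibp]
  field_simp
  ring

theorem setIntegral_cell_deriv_fst_mul_moment {xi Δx c d : ℝ} (hΔx : 0 < Δx)
    {G G' : ℝ × ℝ → ℝ} {ψ : ℝ → ℝ} (hG : Continuous G) (hG' : Continuous G')
    (hψ : Continuous ψ) (hderiv : ∀ x y, HasDerivAt (fun ξ => G (ξ, y)) (G' (x, y)) x) :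
    ∫ p in Ioo (xi - Δx / 2) (xi + Δx / 2) ×ˢ Ioo c d, G' p * ((p.1 - xi) / Δx) * ψ p.2 =
      (1 / 2) * (∫ y in Ioo c d, (G (xi + Δx / 2, y) + G (xi - Δx / 2, y)) * ψ y)
        - (1 / Δx) * ∫ p in Ioo (xi - Δx / 2) (xi + Δx / 2) ×ˢ Ioo c d, G p * ψ p.2 := by
  have hint : ∀ {f : ℝ × ℝ → ℝ}, Continuous f →
      IntegrableOn f (Ioo (xi - Δx / 2) (xi + Δx / 2) ×ˢ Ioo c d) :=
    fun hf => hf.integrableOn_Ioo_prod_Ioo _ _ _ _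
  have hcell : ∀ y, ∫ x in Ioo (xi - Δx / 2) (xi + Δx / 2),
      (G' (x, y) * ((x - xi) / Δx) * ψ y + 1 / Δx * (G (x, y) * ψ y)) =
      (G (xi + Δx / 2, y) + G (xi - Δx / 2, y)) / 2 * ψ y := fun y => by
    rw [← integral_cell_deriv_mul_moment_add hΔx (fun x _ => hderiv x y)
      ((hG'.comp (.prodMk_left y)).intervalIntegrable _ _), ← integral_mul_const]
    exact integral_congr_ae (.of_forall fun x => by ring)
  -- Fubini is applied to the sum, whose inner `x`-integral is explicit by `hcell`; this avoids
  -- handling the parametric integral `y ↦ ∫ x, G (x, y)` on its own.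
  have hsum : ∫ p in Ioo (xi - Δx / 2) (xi + Δx / 2) ×ˢ Ioo c d,
      (G' p * ((p.1 - xi) / Δx) * ψ p.2 + 1 / Δx * (G p * ψ p.2)) =
      (1 / 2) * ∫ y in Ioo c d, (G (xi + Δx / 2, y) + G (xi - Δx / 2, y)) * ψ y := by
    rw [Measure.volume_eq_prod, ← setIntegral_prod_swap, setIntegral_prod]
    · simp only [Prod.swap_prod_mk, hcell, ← integral_const_mul]
      exact integral_congr_ae (.of_forall fun y => by ring)
    · exact Continuous.integrableOn_Ioo_prod_Ioo (by fun_prop) _ _ _ _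
  rw [← hsum, integral_add (hint (by fun_prop)) (hint (by fun_prop)), integral_const_mul]
  ring

theorem setIntegral_prod_swap_real {E : Type*} [NormedAddCommGroup E] [NormedSpace ℝ E]
    (s t : Set ℝ) (f : ℝ × ℝ → E) : ∫ p in s ×ˢ t, f p = ∫ p in t ×ˢ s, f p.swap :=
  (setIntegral_prod_swap s t f).symm

theorem setIntegral_cell_deriv_snd_mul_moment {yj Δy a b : ℝ} (hΔy : 0 < Δy)
    {G G' : ℝ × ℝ → ℝ} {φ : ℝ → ℝ} (hG : Continuous G) (hG' : Continuous G')
    (hφ : Continuous φ) (hderiv : ∀ x y, HasDerivAt (fun η => G (x, η)) (G' (x, y)) y) :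
    ∫ p in Ioo a b ×ˢ Ioo (yj - Δy / 2) (yj + Δy / 2), G' p * φ p.1 * ((p.2 - yj) / Δy) =
      (1 / 2) * (∫ x in Ioo a b, (G (x, yj + Δy / 2) + G (x, yj - Δy / 2)) * φ x)
        - (1 / Δy) * ∫ p in Ioo a b ×ˢ Ioo (yj - Δy / 2) (yj + Δy / 2), G p * φ p.1 := by
  have hswap := setIntegral_cell_deriv_fst_mul_moment hΔy (xi := yj) (c := a) (d := b)
    (ψ := φ) (hG.comp continuous_swap) (hG'.comp continuous_swap) hφ fun y x => hderiv x y
  rw [setIntegral_prod_swap_real, setIntegral_prod_swap_real (Ioo a b)]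
  convert hswap using 3
  · simp only [Function.comp_apply, Prod.fst_swap, Prod.snd_swap]
    ring
  · rfl
  · rfl

theorem setIntegral_cell_neg_sub_mul_moments {xi yj Δx Δy : ℝ} (hΔx : 0 < Δx) (hΔy : 0 < Δy)
    {G₁ G₂ G₁' G₂' : ℝ × ℝ → ℝ} (hG₁ : Continuous G₁) (hG₂ : Continuous G₂)
    (hG₁' : Continuous G₁') (hG₂' : Continuous G₂')
    (hderiv₁ : ∀ x y, HasDerivAt (fun ξ => G₁ (ξ, y)) (G₁' (x, y)) x)
    (hderiv₂ : ∀ x y, HasDerivAt (fun η => G₂ (x, η)) (G₂' (x, y)) y) :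
    ∫ p in Ioo (xi - Δx / 2) (xi + Δx / 2) ×ˢ Ioo (yj - Δy / 2) (yj + Δy / 2),
        (-G₁' p - G₂' p) * ((p.1 - xi) / Δx) * ((p.2 - yj) / Δy) =
      -(1 / 2) * (∫ y in Ioo (yj - Δy / 2) (yj + Δy / 2),
          (G₁ (xi + Δx / 2, y) + G₁ (xi - Δx / 2, y)) * ((y - yj) / Δy))
        - (1 / 2) * (∫ x in Ioo (xi - Δx / 2) (xi + Δx / 2),
          (G₂ (x, yj + Δy / 2) + G₂ (x, yj - Δy / 2)) * ((x - xi) / Δx))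
        + (1 / Δx) * (∫ p in Ioo (xi - Δx / 2) (xi + Δx / 2) ×ˢ
            Ioo (yj - Δy / 2) (yj + Δy / 2), G₁ p * ((p.2 - yj) / Δy))
        + (1 / Δy) * (∫ p in Ioo (xi - Δx / 2) (xi + Δx / 2) ×ˢ
            Ioo (yj - Δy / 2) (yj + Δy / 2), G₂ p * ((p.1 - xi) / Δx)) := by
  have hint : ∀ {f : ℝ × ℝ → ℝ}, Continuous f → IntegrableOn f
      (Ioo (xi - Δx / 2) (xi + Δx / 2) ×ˢ Ioo (yj - Δy / 2) (yj + Δy / 2)) :=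
    fun hf => hf.integrableOn_Ioo_prod_Ioo _ _ _ _
  simp only [sub_mul, neg_mul]
  rw [integral_sub (hint (by fun_prop)) (hint (by fun_prop)), integral_neg,
    setIntegral_cell_deriv_fst_mul_moment hΔx (ψ := fun y => (y - yj) / Δy) hG₁ hG₁'
      (by fun_prop) hderiv₁,
    setIntegral_cell_deriv_snd_mul_moment hΔy (φ := fun x => (x - xi) / Δx) hG₂ hG₂'
      (by fun_prop) hderiv₂]
  ring

/-- Exact evolution of the mixed first moment for a 2D conservation law: if
`u_t + (H₁)_x + (H₂)_y = 0` with `u, H₁, H₂` of class `C¹`, then the mixed moment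
`Z̄_{ij}(t) = (1/(ΔxΔy)) ∬_{I_{ij}} u ((x - x_i)/Δx)((y - y_j)/Δy) dx dy` is
differentiable in `t` and satisfies the exact evolution equation obtained by multiplying
the conservation law by `((x - x_i)/Δx)((y - y_j)/Δy)` and integrating by parts. -/
theorem stmt_14 (Δx Δy xi yj : ℝ) (hΔx : 0 < Δx) (hΔy : 0 < Δy)
    (u H₁ H₂ : ℝ × ℝ × ℝ → ℝ)
    (hu : ContDiff ℝ 1 u) (hH₁ : ContDiff ℝ 1 H₁) (hH₂ : ContDiff ℝ 1 H₂)
    (hlaw : ∀ x y t : ℝ,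
      deriv (fun τ : ℝ => u (x, y, τ)) t
        + deriv (fun ξ : ℝ => H₁ (ξ, y, t)) x
        + deriv (fun η : ℝ => H₂ (x, η, t)) y = 0) :
    ∀ t : ℝ,
      HasDerivAt
        (fun τ : ℝ => (1 / (Δx * Δy)) *
          ∫ p in Set.Ioo (xi - Δx / 2) (xi + Δx / 2) ×ˢ Set.Ioo (yj - Δy / 2) (yj + Δy / 2),
            u (p.1, p.2, τ) * ((p.1 - xi) / Δx) * ((p.2 - yj) / Δy))
        (-(1 / (2 * Δx * Δy)) *
            (∫ y in Set.Ioo (yj - Δy / 2) (yj + Δy / 2),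
              (H₁ (xi + Δx / 2, y, t) + H₁ (xi - Δx / 2, y, t)) * ((y - yj) / Δy))
          - (1 / (2 * Δx * Δy)) *
            (∫ x in Set.Ioo (xi - Δx / 2) (xi + Δx / 2),
              (H₂ (x, yj + Δy / 2, t) + H₂ (x, yj - Δy / 2, t)) * ((x - xi) / Δx))
          + (1 / (Δx ^ 2 * Δy)) *
            (∫ p in Set.Ioo (xi - Δx / 2) (xi + Δx / 2) ×ˢ Set.Ioo (yj - Δy / 2) (yj + Δy / 2),
              H₁ (p.1, p.2, t) * ((p.2 - yj) / Δy))
          + (1 / (Δx * Δy ^ 2)) *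
            (∫ p in Set.Ioo (xi - Δx / 2) (xi + Δx / 2) ×ˢ Set.Ioo (yj - Δy / 2) (yj + Δy / 2),
              H₂ (p.1, p.2, t) * ((p.1 - xi) / Δx))) t := by
  intro t
  have hF₁ := hH₁.continuous_fderiv_apply_timeSlice (1, 0, 0) t
  have hF₂ := hH₂.continuous_fderiv_apply_timeSlice (0, 1, 0) t
  have hH₁₀ := hH₁.continuous
  have hH₂₀ := hH₂.continuous
  refine ((hasDerivAt_setIntegral_Ioo_prod_Ioo_mul_mul hu (φ := fun x => (x - xi) / Δx)
    (ψ := fun y => (y - yj) / Δy) (by fun_prop) (by fun_prop) _ _ _ _ t).const_mul _).congr_deriv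
    ?_
  simp only [fderiv_time_eq_neg_sub_of_conservationLaw (hu.differentiable one_ne_zero)
    (hH₁.differentiable one_ne_zero) (hH₂.differentiable one_ne_zero) hlaw]
  rw [setIntegral_cell_neg_sub_mul_moments hΔx hΔy (G₁ := fun p => H₁ (p.1, p.2, t))
    (G₂ := fun p => H₂ (p.1, p.2, t)) (by fun_prop) (by fun_prop) hF₁ hF₂
    (fun x y => (hH₁.differentiable one_ne_zero _).hasDerivAt_slice₁)
    (fun x y => (hH₂.differentiable one_ne_zero _).hasDerivAt_slice₂)]
  field_simp
end
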